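/- Let M = (D, α₀, α₁) be a planar hypermap and let x, y be darts of M with α₀(x) currently undefined to be relinked to y (formally: let M' be obtained from M by modifying α₀ so that x is 0-linked to y, under the precondition that this yields a valid hypermap). Then M' is planar if and only if either x and y lie in distinct connected components of M, or α₁⁻¹(x) and y lie in the same face of M. -/
import Mathlib


open scoped Classical

/-- Dimensions 0 and 1. -/
inductive Dim : Type
  | zero : Dim
  | one : Dim
deriving DecidableEq

/-- Free maps: empty map, dart insertion, dart linking at a dimension. -/
inductive Fmap : Type
  | V : Fmap
  | I : Fmap → Nat → Fmap
  | L : Fmap → Dim → Nat → Nat → Fmap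

namespace Fmap

/-- The nil (exception) dart. -/
def nil : Nat := 0

/-- A dart exists in the map. -/
def exd : Fmap → Nat → Prop
  | V, _ => False
  | I m0 x, z => z = x ∨ exd m0 z
  | L m0 _ _ _, z => exd m0 z

/-- The (partial) k-successor α_k, with nil for undefined. -/
def A : Fmap → Dim → Nat → Nat
  | V, _, _ => nil
  | I m0 _, k, z => A m0 k z
  | L m0 k0 x y, k, z =>
      if k = k0 then (if z = x then y else A m0 k z) else A m0 k z

/-- The (partial) k-predecessor. -/
def A_1 : Fmap → Dim → Nat → Nat
  | V, _, _ => nil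
  | I m0 _, k, z => A_1 m0 k z
  | L m0 k0 x y, k, z =>
      if k = k0 then (if z = y then x else A_1 m0 k z) else A_1 m0 k z

/-- z has a k-successor. -/
def succd (m : Fmap) (k : Dim) (z : Nat) : Prop := A m k z ≠ nil

/-- z has a k-predecessor. -/
def predd (m : Fmap) (k : Dim) (z : Nat) : Prop := A_1 m k z ≠ nil

/-- Bottom dart of the open k-orbit of z. -/
def bottom : Fmap → Dim → Nat → Nat
  | V, _, _ => nil
  | I m0 x, k, z => if z = x then z else bottom m0 k z
  | L m0 k0 x y, k, z =>
      if k = k0 then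
        (if bottom m0 k z = y then bottom m0 k x else bottom m0 k z)
      else bottom m0 k z

/-- Top dart of the open k-orbit of z. -/
def top : Fmap → Dim → Nat → Nat
  | V, _, _ => nil
  | I m0 x, k, z => if z = x then z else top m0 k z
  | L m0 k0 x y, k, z =>
      if k = k0 then
        (if top m0 k z = x then top m0 k y else top m0 k z)
      else top m0 k z

/-- Closure of A: a permutation of existing darts. -/
def cA : Fmap → Dim → Nat → Nat
  | V, _, _ => nil
  | I m0 x, k, z => if z = x then z else cA m0 k z
  | L m0 k0 x y, k, z =>
      if k = k0 then
        (if z = x then y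
         else if z = top m0 k y then bottom m0 k x
         else cA m0 k z)
      else cA m0 k z

/-- Closure of A_1: the inverse permutation of cA. -/
def cA_1 : Fmap → Dim → Nat → Nat
  | V, _, _ => nil
  | I m0 x, k, z => if z = x then z else cA_1 m0 k z
  | L m0 k0 x y, k, z =>
      if k = k0 then
        (if z = y then x
         else if z = bottom m0 k x then top m0 k y
         else cA_1 m0 k z)
      else cA_1 m0 k z

/-- Precondition for inserting a dart. -/
def prec_I (m : Fmap) (x : Nat) : Prop := x ≠ nil ∧ ¬ exd m x

/-- Precondition for linking two darts at a dimension (keeping orbits open). -/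
def prec_L (m : Fmap) (k : Dim) (x y : Nat) : Prop :=
  exd m x ∧ exd m y ∧ ¬ succd m k x ∧ ¬ predd m k y ∧ cA m k x ≠ y

/-- The hypermap invariant. -/
def inv_hmap : Fmap → Prop
  | V => True
  | I m0 x => inv_hmap m0 ∧ prec_I m0 x
  | L m0 k0 x y => inv_hmap m0 ∧ prec_L m0 k0 x y

/-- The closed face map cF, corresponding to φ = α₁⁻¹ ∘ α₀⁻¹. -/
def cF (m : Fmap) (z : Nat) : Nat := cA_1 m Dim.one (cA_1 m Dim.zero z)

/-- Two darts are in the same face (existence of a cF-path). -/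
def expf (m : Fmap) (z t : Nat) : Prop := exd m z ∧ ∃ n : ℕ, (cF m)^[n] z = t

/-- Two darts are in the same edge (existence of a (cA zero)-path). -/
def expe (m : Fmap) (z t : Nat) : Prop := exd m z ∧ ∃ n : ℕ, (fun w => cA m Dim.zero w)^[n] z = t

/-- Two darts are in the same connected component. -/
def eqc : Fmap → Nat → Nat → Prop
  | V, _, _ => False
  | I m0 x, z, t => (z = x ∧ t = x) ∨ eqc m0 z t
  | L m0 _ x y, z, t =>
      eqc m0 z t ∨ (eqc m0 z x ∧ eqc m0 y t) ∨ (eqc m0 z y ∧ eqc m0 x t)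

/-- Number of darts. -/
def nd : Fmap → ℤ
  | V => 0
  | I m0 _ => nd m0 + 1
  | L m0 _ _ _ => nd m0

/-- Number of vertices. -/
def nv : Fmap → ℤ
  | V => 0
  | I m0 _ => nv m0 + 1
  | L m0 Dim.zero _ _ => nv m0
  | L m0 Dim.one _ _ => nv m0 - 1

/-- Number of edges. -/
def ne : Fmap → ℤ
  | V => 0
  | I m0 _ => ne m0 + 1
  | L m0 Dim.zero _ _ => ne m0 - 1
  | L m0 Dim.one _ _ => ne m0

/-- Number of faces. -/
noncomputable def nf : Fmap → ℤ
  | V => 0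
  | I m0 _ => nf m0 + 1
  | L m0 Dim.zero x y => if expf m0 (cA_1 m0 Dim.one x) y then nf m0 + 1 else nf m0 - 1
  | L m0 Dim.one x y => if expf m0 x (cA m0 Dim.zero y) then nf m0 + 1 else nf m0 - 1

/-- Number of connected components. -/
noncomputable def nc : Fmap → ℤ
  | V => 0
  | I m0 _ => nc m0 + 1
  | L m0 _ x y => if eqc m0 x y then nc m0 else nc m0 - 1

/-- Euler characteristic. -/
noncomputable def ec (m : Fmap) : ℤ := nv m + ne m + nf m - nd m

/-- Genus. -/
noncomputable def genus (m : Fmap) : ℤ := nc m - ec m / 2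

/-- Planarity. -/
def planar (m : Fmap) : Prop := genus m = 0

/-- Breaking the latest forward k-link of x. -/
def B : Fmap → Dim → Nat → Fmap
  | V, _, _ => V
  | I m0 x0, k, x => I (B m0 k x) x0
  | L m0 k0 x0 y0, k, x =>
      if k = k0 ∧ x = x0 then m0 else L (B m0 k x) k0 x0 y0

/-- Breaking all the 0-links of the darts of a list, first one first. -/
def Bl (m : Fmap) : List (Nat × Bool) → Fmap
  | [] => m
  | (x, _) :: l0 => Bl (B m Dim.zero x) l0

/-- The dart representing the face coded by a double-link (x, b). -/
def faceDart (m : Fmap) : Nat × Bool → Nat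
  | (x, b) => if b then A m Dim.zero x else bottom m Dim.zero x

/-- The edge of x is distinct from the edges of the darts of a list. -/
def distinct_edge_list (m : Fmap) (x : Nat) : List (Nat × Bool) → Prop
  | [] => True
  | (x', _) :: l0 => distinct_edge_list m x l0 ∧ ¬ expe m x x'

/-- Ring condition (0): unicity of edges, and each dart 0-linked. -/
def pre_ring0 (m : Fmap) : List (Nat × Bool) → Prop
  | [] => True
  | (x, _) :: l0 => pre_ring0 m l0 ∧ distinct_edge_list m x l0 ∧ succd m Dim.zero x

/-- Adjacency of the faces coded by two double-links. -/
def adjacent_faces (m : Fmap) : Nat × Bool → Nat × Bool → Prop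
  | (x, b), (x', b') =>
      let y := A m Dim.zero x
      let y' := A m Dim.zero x'
      let x0 := bottom m Dim.zero x
      let x'0 := bottom m Dim.zero x'
      if b then (if b' then expf m x0 y' else expf m x0 x'0)
      else (if b' then expf m y y' else expf m y x'0)

/-- Ring condition (1): continuity. -/
def pre_ring1 (m : Fmap) : List (Nat × Bool) → Prop
  | [] => True
  | xb :: l0 =>
      pre_ring1 m l0 ∧
      match l0 with
      | [] => True
      | xb' :: _ => adjacent_faces m xb xb'

/-- Last element of a list of double-links (with default). -/
def lastd : List (Nat × Bool) → Nat × Bool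
  | [] => (nil, true)
  | [a] => a
  | _ :: a :: l0 => lastd (a :: l0)

/-- Ring condition (2): circularity. -/
def pre_ring2 (m : Fmap) : List (Nat × Bool) → Prop
  | [] => True
  | (x, b) :: l0 =>
      match l0 with
      | [] => expf m (A m Dim.zero x) (bottom m Dim.zero x)
      | _ :: _ => adjacent_faces m (lastd l0) (x, b)

/-- The faces coded by two double-links are distinct. -/
def distinct_faces (m : Fmap) (xb xb' : Nat × Bool) : Prop :=
  ¬ expf m (faceDart m xb) (faceDart m xb')

/-- The face of xb is distinct from the faces of a list. -/
def distinct_face_list (m : Fmap) (xb : Nat × Bool) : List (Nat × Bool) → Prop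
  | [] => True
  | xb' :: l0 => distinct_face_list m xb l0 ∧ distinct_faces m xb xb'

/-- Ring condition (3): simplicity. -/
def pre_ring3 (m : Fmap) : List (Nat × Bool) → Prop
  | [] => True
  | xb :: l0 => pre_ring3 m l0 ∧ distinct_face_list m xb l0

/-- A ring of faces. -/
def ring (m : Fmap) (l : List (Nat × Bool)) : Prop :=
  l ≠ [] ∧ pre_ring0 m l ∧ pre_ring1 m l ∧ pre_ring2 m l ∧ pre_ring3 m l

end Fmap

namespace Fmap

lemma eqc_refl : ∀ (m : Fmap) (z : Nat), exd m z → eqc m z z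
  | V, _, h => h.elim
  | I m0 _, z, h => by
      rcases h with h | h
      · exact Or.inl ⟨h, h⟩
      · exact Or.inr (eqc_refl m0 z h)
  | L m0 _ _ _, z, h => Or.inl (eqc_refl m0 z h)

lemma eqc_symm : ∀ (m : Fmap) {z t : Nat}, eqc m z t → eqc m t z
  | V, _, _, h => h.elim
  | I m0 _, _, _, h => by
      rcases h with ⟨h1, h2⟩ | h
      · exact Or.inl ⟨h2, h1⟩
      · exact Or.inr (eqc_symm m0 h)
  | L m0 _ _ _, _, _, h => by
      rcases h with h | ⟨h1, h2⟩ | ⟨h1, h2⟩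
      · exact Or.inl (eqc_symm m0 h)
      · exact Or.inr (Or.inr ⟨eqc_symm m0 h2, eqc_symm m0 h1⟩)
      · exact Or.inr (Or.inl ⟨eqc_symm m0 h2, eqc_symm m0 h1⟩)

lemma eqc_trans : ∀ (m : Fmap) {z t u : Nat}, eqc m z t → eqc m t u → eqc m z u
  | V, _, _, _, h, _ => h.elim
  | I m0 _, _, _, _, h, h' => by
      rcases h with ⟨h1, h2⟩ | h <;> rcases h' with ⟨h1', h2'⟩ | h'
      · exact Or.inl ⟨h1, h2'⟩
      · subst h1; subst h2; exact Or.inr h'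
      · subst h1'; subst h2'; exact Or.inr h
      · exact Or.inr (eqc_trans m0 h h')
  | L m0 _ _ _, _, _, _, h, h' => by
      rcases h with h | ⟨h1, h2⟩ | ⟨h1, h2⟩ <;>
        rcases h' with h' | ⟨h1', h2'⟩ | ⟨h1', h2'⟩
      · exact Or.inl (eqc_trans m0 h h')
      · exact Or.inr (Or.inl ⟨eqc_trans m0 h h1', h2'⟩)
      · exact Or.inr (Or.inr ⟨eqc_trans m0 h h1', h2'⟩)
      · exact Or.inr (Or.inl ⟨h1, eqc_trans m0 h2 h'⟩)
      · exact Or.inr (Or.inl ⟨h1, h2'⟩)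
      · exact Or.inl (eqc_trans m0 h1 h2')
      · exact Or.inr (Or.inr ⟨h1, eqc_trans m0 h2 h'⟩)
      · exact Or.inl (eqc_trans m0 h1 h2')
      · exact Or.inr (Or.inr ⟨h1, h2'⟩)

lemma exd_top : ∀ (m : Fmap) (k : Dim) (z : Nat), inv_hmap m → exd m z → exd m (top m k z)
  | V, _, _, _, h => h.elim
  | I m0 x, k, z, hm, hz => by
      simp only [top]
      by_cases h : z = x
      · simp only [if_pos h]; exact hz
      · simp only [if_neg h]; exact Or.inr (exd_top m0 k z hm.1 (hz.resolve_left h))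
  | L m0 k0 x y, k, z, hm, hz => by
      simp only [top]
      by_cases hk : k = k0
      · simp only [if_pos hk]
        by_cases ht : top m0 k z = x
        · simp only [if_pos ht]; exact exd_top m0 k y hm.1 hm.2.2.1
        · simp only [if_neg ht]; exact exd_top m0 k z hm.1 hz
      · simp only [if_neg hk]; exact exd_top m0 k z hm.1 hz

lemma exd_bottom : ∀ (m : Fmap) (k : Dim) (z : Nat), inv_hmap m → exd m z → exd m (bottom m k z)
  | V, _, _, _, h => h.elim
  | I m0 x, k, z, hm, hz => by
      simp only [bottom]
      by_cases h : z = x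
      · simp only [if_pos h]; exact hz
      · simp only [if_neg h]; exact Or.inr (exd_bottom m0 k z hm.1 (hz.resolve_left h))
  | L m0 k0 x y, k, z, hm, hz => by
      simp only [bottom]
      by_cases hk : k = k0
      · simp only [if_pos hk]
        by_cases hb : bottom m0 k z = y
        · simp only [if_pos hb]; exact exd_bottom m0 k x hm.1 hm.2.1
        · simp only [if_neg hb]; exact exd_bottom m0 k z hm.1 hz
      · simp only [if_neg hk]; exact exd_bottom m0 k z hm.1 hz

lemma exd_cA_1 : ∀ (m : Fmap) (k : Dim) (z : Nat), inv_hmap m → exd m z → exd m (cA_1 m k z)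
  | V, _, _, _, h => h.elim
  | I m0 x, k, z, hm, hz => by
      simp only [cA_1]
      by_cases h : z = x
      · simp only [if_pos h]; exact hz
      · simp only [if_neg h]; exact Or.inr (exd_cA_1 m0 k z hm.1 (hz.resolve_left h))
  | L m0 k0 x y, k, z, hm, hz => by
      simp only [cA_1]
      by_cases hk : k = k0
      · simp only [if_pos hk]
        by_cases h1 : z = y
        · simp only [if_pos h1]; exact hm.2.1
        · simp only [if_neg h1]
          by_cases hb : z = bottom m0 k x
          · simp only [if_pos hb]; exact exd_top m0 k y hm.1 hm.2.2.1
          · simp only [if_neg hb]; exact exd_cA_1 m0 k z hm.1 hz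
      · simp only [if_neg hk]; exact exd_cA_1 m0 k z hm.1 hz

lemma eqc_bottom : ∀ (m : Fmap) (k : Dim) (z : Nat), inv_hmap m → exd m z → eqc m z (bottom m k z)
  | V, _, _, _, h => h.elim
  | I m0 x, k, z, hm, hz => by
      simp only [bottom]
      by_cases h : z = x
      · simp only [if_pos h]; exact Or.inl ⟨h, h⟩
      · simp only [if_neg h]; exact Or.inr (eqc_bottom m0 k z hm.1 (hz.resolve_left h))
  | L m0 k0 x y, k, z, hm, hz => by
      simp only [bottom]
      by_cases hk : k = k0
      · simp only [if_pos hk]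
        by_cases hb : bottom m0 k z = y
        · simp only [if_pos hb]
          exact Or.inr (Or.inr ⟨hb ▸ eqc_bottom m0 k z hm.1 hz, eqc_bottom m0 k x hm.1 hm.2.1⟩)
        · simp only [if_neg hb]; exact Or.inl (eqc_bottom m0 k z hm.1 hz)
      · simp only [if_neg hk]; exact Or.inl (eqc_bottom m0 k z hm.1 hz)

lemma eqc_top : ∀ (m : Fmap) (k : Dim) (z : Nat), inv_hmap m → exd m z → eqc m z (top m k z)
  | V, _, _, _, h => h.elim
  | I m0 x, k, z, hm, hz => by
      simp only [top]
      by_cases h : z = x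
      · simp only [if_pos h]; exact Or.inl ⟨h, h⟩
      · simp only [if_neg h]; exact Or.inr (eqc_top m0 k z hm.1 (hz.resolve_left h))
  | L m0 k0 x y, k, z, hm, hz => by
      simp only [top]
      by_cases hk : k = k0
      · simp only [if_pos hk]
        by_cases ht : top m0 k z = x
        · simp only [if_pos ht]
          exact Or.inr (Or.inl ⟨ht ▸ eqc_top m0 k z hm.1 hz, eqc_top m0 k y hm.1 hm.2.2.1⟩)
        · simp only [if_neg ht]; exact Or.inl (eqc_top m0 k z hm.1 hz)
      · simp only [if_neg hk]; exact Or.inl (eqc_top m0 k z hm.1 hz)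

lemma eqc_cA : ∀ (m : Fmap) (k : Dim) (z : Nat), inv_hmap m → exd m z → eqc m z (cA m k z)
  | V, _, _, _, h => h.elim
  | I m0 x, k, z, hm, hz => by
      simp only [cA]
      by_cases h : z = x
      · simp only [if_pos h]; exact Or.inl ⟨h, h⟩
      · simp only [if_neg h]; exact Or.inr (eqc_cA m0 k z hm.1 (hz.resolve_left h))
  | L m0 k0 x y, k, z, hm, hz => by
      simp only [cA]
      by_cases hk : k = k0
      · simp only [if_pos hk]
        by_cases h1 : z = x
        · simp only [if_pos h1]; subst h1
          exact Or.inr (Or.inl ⟨eqc_refl m0 z hz, eqc_refl m0 y hm.2.2.1⟩)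
        · simp only [if_neg h1]
          by_cases h2 : z = top m0 k y
          · simp only [if_pos h2]
            refine Or.inr (Or.inr ⟨?_, eqc_bottom m0 k x hm.1 hm.2.1⟩)
            rw [h2]; exact eqc_symm m0 (eqc_top m0 k y hm.1 hm.2.2.1)
          · simp only [if_neg h2]; exact Or.inl (eqc_cA m0 k z hm.1 hz)
      · simp only [if_neg hk]; exact Or.inl (eqc_cA m0 k z hm.1 hz)

lemma eqc_cA_1 : ∀ (m : Fmap) (k : Dim) (z : Nat), inv_hmap m → exd m z → eqc m z (cA_1 m k z)
  | V, _, _, _, h => h.elim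
  | I m0 x, k, z, hm, hz => by
      simp only [cA_1]
      by_cases h : z = x
      · simp only [if_pos h]; exact Or.inl ⟨h, h⟩
      · simp only [if_neg h]; exact Or.inr (eqc_cA_1 m0 k z hm.1 (hz.resolve_left h))
  | L m0 k0 x y, k, z, hm, hz => by
      simp only [cA_1]
      by_cases hk : k = k0
      · simp only [if_pos hk]
        by_cases h1 : z = y
        · simp only [if_pos h1]; subst h1
          exact Or.inr (Or.inr ⟨eqc_refl m0 z hz, eqc_refl m0 x hm.2.1⟩)
        · simp only [if_neg h1]
          by_cases h2 : z = bottom m0 k x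
          · simp only [if_pos h2]
            refine Or.inr (Or.inl ⟨?_, eqc_top m0 k y hm.1 hm.2.2.1⟩)
            rw [h2]; exact eqc_symm m0 (eqc_bottom m0 k x hm.1 hm.2.1)
          · simp only [if_neg h2]; exact Or.inl (eqc_cA_1 m0 k z hm.1 hz)
      · simp only [if_neg hk]; exact Or.inl (eqc_cA_1 m0 k z hm.1 hz)

lemma exd_cF (m : Fmap) (z : Nat) (hm : inv_hmap m) (hz : exd m z) : exd m (cF m z) :=
  exd_cA_1 m Dim.one _ hm (exd_cA_1 m Dim.zero z hm hz)

lemma eqc_cF (m : Fmap) (z : Nat) (hm : inv_hmap m) (hz : exd m z) : eqc m z (cF m z) :=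
  eqc_trans m (eqc_cA_1 m Dim.zero z hm hz)
    (eqc_cA_1 m Dim.one _ hm (exd_cA_1 m Dim.zero z hm hz))

lemma eqc_iter_cF (m : Fmap) (hm : inv_hmap m) :
    ∀ (n : ℕ) (z : Nat), exd m z → eqc m z ((cF m)^[n] z)
  | 0, z, hz => eqc_refl m z hz
  | n + 1, z, hz => by
      rw [Function.iterate_succ_apply]
      exact eqc_trans m (eqc_cF m z hm hz) (eqc_iter_cF m hm n _ (exd_cF m z hm hz))

lemma expf_eqc (m : Fmap) {z t : Nat} (hm : inv_hmap m) (h : expf m z t) : eqc m z t := by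
  obtain ⟨hz, n, hn⟩ := h
  exact hn ▸ eqc_iter_cF m hm n z hz

lemma ec_I (m : Fmap) (x : Nat) : ec (I m x) = ec m + 2 := by
  simp only [ec, nv, ne, nf, nd]; ring

lemma ec_mod_two (m : Fmap) : ec m % 2 = 0 := by
  induction m with
  | V => simp [ec, nv, ne, nf, nd]
  | I m0 x ih => rw [ec_I]; omega
  | L m0 k x y ih =>
      cases k with
      | zero =>
          simp only [ec, nv, ne, nf, nd] at ih ⊢
          split_ifs <;> omega
      | one =>
          simp only [ec, nv, ne, nf, nd] at ih ⊢
          split_ifs <;> omega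

lemma genus_nonneg (m : Fmap) (hm : inv_hmap m) : 0 ≤ genus m := by
  induction m with
  | V => simp [genus, nc, ec, nv, ne, nf, nd]
  | I m0 x ih =>
      have h2 := ec_mod_two m0
      have ih' := ih hm.1
      simp only [genus, nc] at ih' ⊢
      rw [ec_I]
      omega
  | L m0 k x y ih =>
      have hm0 : inv_hmap m0 := hm.1
      have hp : prec_L m0 k x y := hm.2
      have h2 := ec_mod_two m0
      have ih' := ih hm0
      simp only [genus, ec] at ih' h2 ⊢
      cases k with
      | zero =>
          have hkey : expf m0 (cA_1 m0 Dim.one x) y → eqc m0 x y := fun hf =>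
            eqc_trans m0 (eqc_cA_1 m0 Dim.one x hm0 hp.1) (expf_eqc m0 hm0 hf)
          simp only [nc, nv, ne, nf, nd]
          by_cases hf : expf m0 (cA_1 m0 Dim.one x) y
          · rw [if_pos hf, if_pos (hkey hf)]; omega
          · rw [if_neg hf]
            by_cases he : eqc m0 x y
            · rw [if_pos he]; omega
            · rw [if_neg he]; omega
      | one =>
          have hkey : expf m0 x (cA m0 Dim.zero y) → eqc m0 x y := fun hf =>
            eqc_trans m0 (expf_eqc m0 hm0 hf) (eqc_symm m0 (eqc_cA m0 Dim.zero y hm0 hp.2.1))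
          simp only [nc, nv, ne, nf, nd]
          by_cases hf : expf m0 x (cA m0 Dim.zero y)
          · rw [if_pos hf, if_pos (hkey hf)]; omega
          · rw [if_neg hf]
            by_cases he : eqc m0 x y
            · rw [if_pos he]; omega
            · rw [if_neg he]; omega

end Fmap

open Fmap
/-- Planarity criterion for 0-linking. -/
theorem planarity_crit_0 (m : Fmap) (x y : Nat)
    (h1 : inv_hmap m) (h2 : prec_L m Dim.zero x y) :
    planar (Fmap.L m Dim.zero x y) ↔
      planar m ∧ (¬ eqc m x y ∨ expf m (cA_1 m Dim.one x) y) := by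
  have h2e := Fmap.ec_mod_two m
  have hg := Fmap.genus_nonneg m h1
  have hkey : expf m (cA_1 m Dim.one x) y → eqc m x y := fun hf =>
    Fmap.eqc_trans m (Fmap.eqc_cA_1 m Dim.one x h1 h2.1) (Fmap.expf_eqc m h1 hf)
  simp only [planar, genus, ec, nc, nv, ne, nf, nd] at hg h2e ⊢
  by_cases hf : expf m (cA_1 m Dim.one x) y
  · rw [if_pos hf, if_pos (hkey hf)]
    constructor
    · intro h; exact ⟨by omega, Or.inr hf⟩
    · rintro ⟨hp, -⟩; omega
  · rw [if_neg hf]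
    by_cases he : eqc m x y
    · rw [if_pos he]
      constructor
      · intro h; exfalso; omega
      · rintro ⟨hp, h | h⟩
        · exact absurd he h
        · exact absurd h hf
    · rw [if_neg he]
      constructor
      · intro h; exact ⟨by omega, Or.inl he⟩
      · rintro ⟨hp, -⟩; omega
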